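/- Let G be a finite nested group with chain of centers G = X_0 > X_1 > ⋯ > X_n ≥ 1. If [X_{i-1},G] ≰ X_i for some integer i with 1 ≤ i ≤ n, then [X_{i-1},G] = [[X_{i-1},G],G]. -/

import Mathlib

open CategoryTheory

noncomputable section

/-- The kernel of the character of `V`: `{g | χ(g) = χ(1)}`. -/
def charKernel {G : Type} [Group G] (V : FDRep ℂ G) : Set G :=
  {g | V.character g = V.character 1}

/-- The center of the character of `V`: `{g | |χ(g)| = χ(1)}`. -/
def charCenter {G : Type} [Group G] (V : FDRep ℂ G) : Set G :=
  {g | ((‖V.character g‖ : ℝ) : ℂ) = V.character 1}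

/-- The degree `χ(1)` of the character of `V`. -/
def charDegree {G : Type} [Group G] (V : FDRep ℂ G) : ℕ :=
  Module.finrank ℂ V

/-- A group is nested if the centers of its irreducible characters form a chain. -/
def Nested (G : Type) [Group G] : Prop :=
  ∀ V W : FDRep ℂ G, Simple V → Simple W →
    charCenter V ⊆ charCenter W ∨ charCenter W ⊆ charCenter V

/-- `G = X 0 > X 1 > ⋯ > X n ≥ 1` is the chain of centers for `G`: the `X i` are the
distinct subgroups arising as centers of irreducible characters of `G`. -/
def IsChainOfCenters {G : Type} [Group G] (n : ℕ) (X : ℕ → Subgroup G) : Prop :=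
  X 0 = ⊤ ∧ (∀ i ≤ n, (X i).Normal) ∧ (∀ i < n, X (i + 1) < X i) ∧
    (∀ i ≤ n, ∃ V : FDRep ℂ G, Simple V ∧ charCenter V = (X i : Set G)) ∧
    (∀ V : FDRep ℂ G, Simple V → ∃ i ≤ n, charCenter V = (X i : Set G))

/-- `N` is a minimal normal subgroup of `H`. -/
def IsMinimalNormal {H : Type*} [Group H] (N : Subgroup H) : Prop :=
  N.Normal ∧ N ≠ ⊥ ∧ ∀ K : Subgroup H, K.Normal → K ≠ ⊥ → K ≤ N → K = N

/-- An elementary abelian `p`-group: abelian with every element of order dividing `p`. -/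
def IsElementaryAbelian (p : ℕ) (H : Type*) [Group H] : Prop :=
  (∀ a b : H, a * b = b * a) ∧ ∀ a : H, a ^ p = 1

/-!
Write `N = ⁅X i, G⁆` and `M = ⁅N, G⁆`, and let `χ` be an irreducible character. An element lies
in `Z(χ)` exactly when it acts as a scalar (its eigenvalues are roots of unity whose sum has modulus
`χ(1)`, so they coincide), hence, by Schur's lemma, exactly when its commutators lie in `ker χ`.
So `H ⊆ Z(χ)` iff `⁅H, G⁆ ≤ ker χ`. If `M ≤ ker χ`, then `N ≤ Z(χ) = X j`; as `N ≰ X (i + 1)`,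
this forces `j ≤ i`, so `X i ≤ Z(χ)` and `N ≤ ker χ`. Since the kernels of the irreducible
constituents of the permutation representation on `G ⧸ M` meet in `M`, we get `N ≤ M`.
-/

open scoped commutatorElement

universe u

theorem Multiset.eq_inv_card_smul_sum_of_norm_sum_eq_card {E : Type*} [NormedAddCommGroup E]
    [InnerProductSpace ℝ E] {s : Multiset E} (hs : ∀ x ∈ s, ‖x‖ ≤ 1)
    (hsum : ‖s.sum‖ = Multiset.card s) :
    ∀ x ∈ s, x = (Multiset.card s : ℝ)⁻¹ • s.sum := by
  set n : ℝ := (Multiset.card s : ℝ)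
  set w := n⁻¹ • s.sum
  intro x hx
  have hn : n ≠ 0 := by simpa [n] using Multiset.card_pos_iff_exists_mem.mpr ⟨x, hx⟩ |>.ne'
  have hw : ‖w‖ = 1 := by
    rw [norm_smul, hsum, norm_inv, Real.norm_natCast, inv_mul_cancel₀ hn]
  have hinner : (s.map fun y => inner ℝ w y).sum = n := by
    rw [show (fun y => inner ℝ w y) = innerSL ℝ w from rfl, ← map_multiset_sum,
      innerSL_apply_apply, real_inner_smul_left, real_inner_self_eq_norm_sq, hsum]
    field_simp
  -- the squared distances to the mean `w` add up to `∑ ‖y‖ ^ 2 - n ≤ 0`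
  have hsq : (s.map fun y => ‖y - w‖ ^ 2).sum ≤ 0 :=
    calc (s.map fun y => ‖y - w‖ ^ 2).sum
        = (s.map fun y => ‖y‖ ^ 2 - 2 * inner ℝ w y + ‖w‖ ^ 2).sum := by
          simp_rw [norm_sub_sq_real, real_inner_comm]
      _ ≤ (s.map fun y => 2 - 2 * inner ℝ w y).sum := by
          refine Multiset.sum_map_le_sum_map _ _ fun y hy => ?_
          have := hs y hy
          rw [hw]
          nlinarith [norm_nonneg y]
      _ = 0 := by
          rw [Multiset.sum_map_sub, Multiset.sum_map_mul_left, hinner]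
          simp [n]
          ring
  have hx_le := Multiset.single_le_sum (s := s.map fun y => ‖y - w‖ ^ 2) (by simp)
    _ (Multiset.mem_map_of_mem _ hx)
  have : ‖x - w‖ = 0 := by nlinarith [norm_nonneg (x - w)]
  exact sub_eq_zero.mp (norm_eq_zero.mp this)

namespace Module.End

open Polynomial

theorem HasEigenvalue.pow_eq_one {K V : Type*} [Field K] [AddCommGroup V] [Module K V]
    {f : End K V} {μ : K} (hμ : f.HasEigenvalue μ) {m : ℕ} (hf : f ^ m = 1) : μ ^ m = 1 := by
  obtain ⟨v, hv⟩ := hμ.exists_hasEigenvector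
  have h := hv.pow_apply m
  rw [hf, one_apply] at h
  exact smul_left_injective K hv.2 (by simpa using h.symm)

theorem exists_eq_algebraMap_of_pow_eq_one_of_norm_trace_eq_finrank {V : Type*} [AddCommGroup V]
    [Module ℂ V] [FiniteDimensional ℂ V] {f : End ℂ V} {m : ℕ} (hm : m ≠ 0) (hf : f ^ m = 1)
    (htr : ‖LinearMap.trace ℂ V f‖ = finrank ℂ V) : ∃ c : ℂ, f = algebraMap ℂ _ c := by
  have hsplits : f.charpoly.Splits := IsAlgClosed.splits _
  have hnorm : ∀ μ ∈ f.charpoly.roots, ‖μ‖ = 1 := fun μ hμ =>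
    Complex.norm_eq_one_of_pow_eq_one
      (((hasEigenvalue_iff_isRoot_charpoly f μ).mpr (isRoot_of_mem_roots hμ)).pow_eq_one hf) hm
  have hcard : Multiset.card f.charpoly.roots = finrank ℂ V := by
    rw [← f.charpoly_natDegree, splits_iff_card_roots.mp hsplits]
  set c : ℂ := (Multiset.card f.charpoly.roots : ℝ)⁻¹ • f.charpoly.roots.sum
  have hroots : ∀ μ ∈ f.charpoly.roots, μ = c :=
    Multiset.eq_inv_card_smul_sum_of_norm_sum_eq_card (fun μ hμ => (hnorm μ hμ).le)
      (by rw [← trace_eq_sum_roots_charpoly_of_splits hsplits, htr, hcard])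
  refine ⟨c, sub_eq_zero.mp ?_⟩
  -- `f` is killed by the squarefree `X ^ m - 1`, so `f - c` is semisimple with sole eigenvalue `0`
  have hss : (f - algebraMap ℂ _ c).IsSemisimple := by
    rw [isSemisimple_sub_algebraMap_iff]
    refine isSemisimple_of_squarefree_aeval_eq_zero
      (X_pow_sub_one_separable_iff.mpr (by exact_mod_cast hm)).squarefree ?_
    simp [hf]
  refine hss.eq_zero_iff_forall_eigenvalue.mpr fun ν hν => ?_
  obtain ⟨v, hv⟩ := hν.exists_hasEigenvector
  have hfv : f v = (ν + c) • v := by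
    have := hv.apply_eq_smul
    rw [LinearMap.sub_apply, algebraMap_end_apply, sub_eq_iff_eq_add] at this
    rw [this, add_smul]
  have hroot := hroots _ (mem_roots'.mpr ⟨f.charpoly_monic.ne_zero,
    (hasEigenvalue_iff_isRoot_charpoly f _).mp
      (hasEigenvalue_of_hasEigenvector ⟨mem_eigenspace_iff.mpr hfv, hv.2⟩)⟩)
  linear_combination hroot

end Module.End

theorem MonoidHom.commutatorElement_mem_ker_iff {G M : Type*} [Group G] [Monoid M] (f : G →* M)
    {g h : G} : ⁅g, h⁆ ∈ f.ker ↔ Commute (f g) (f h) := by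
  rw [← ker_toHomUnits, mem_ker, map_commutatorElement, commutatorElement_eq_one_iff_commute]
  simp [Commute, SemiconjBy, Units.ext_iff]

theorem eq_top_of_forall_isAtom_le {α : Type*} [Lattice α] [BoundedOrder α]
    [ComplementedLattice α] [IsAtomic α] {b : α} (h : ∀ a, IsAtom a → a ≤ b) : b = ⊤ := by
  obtain ⟨c, hbc⟩ := exists_isCompl b
  obtain rfl | ⟨a, ha, hac⟩ := eq_bot_or_exists_atom_le c
  · exact eq_top_of_isCompl_bot hbc
  · exact absurd (le_bot_iff.mp (hbc.disjoint (h a ha) hac)) ha.1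

namespace Subrepresentation

variable {k G V : Type*} [Field k] [Monoid G] [AddCommGroup V] [Module k V]
  {ρ : Representation k G V}

def mapSubtype {σ : Subrepresentation ρ} (τ : Subrepresentation σ.toRepresentation) :
    Subrepresentation ρ where
  toSubmodule := τ.toSubmodule.map σ.toSubmodule.subtype
  apply_mem_toSubmodule g := by
    rintro _ ⟨x, hx, rfl⟩
    exact ⟨_, τ.apply_mem_toSubmodule g hx, rfl⟩

theorem mem_mapSubtype {σ : Subrepresentation ρ} {τ : Subrepresentation σ.toRepresentation}
    {x : σ.toSubmodule} : (x : V) ∈ mapSubtype τ ↔ x ∈ τ :=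
  ⟨fun ⟨_, hy, hyx⟩ => Subtype.ext hyx ▸ hy, fun hx => ⟨x, hx, rfl⟩⟩

theorem mapSubtype_le {σ : Subrepresentation ρ} (τ : Subrepresentation σ.toRepresentation) :
    mapSubtype τ ≤ σ := by
  rintro _ ⟨x, -, rfl⟩
  exact x.2

instance [FiniteDimensional k V] : WellFoundedLT (Subrepresentation ρ) :=
  (show StrictMono (toSubmodule (ρ := ρ)) from fun _ _ h => h).wellFoundedLT

theorem isIrreducible_toRepresentation_of_isAtom {σ : Subrepresentation ρ} (hσ : IsAtom σ) :
    σ.toRepresentation.IsIrreducible := by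
  obtain ⟨v, hvσ, hv⟩ := (Submodule.ne_bot_iff _).mp fun h => hσ.1 (Subrepresentation.ext h)
  refine { exists_pair_ne := ⟨⊥, ⊤, fun h => hv ?_⟩, eq_bot_or_eq_top := fun τ => ?_ }
  · have : (⟨v, hvσ⟩ : σ.toSubmodule) ∈ (⊥ : Subrepresentation σ.toRepresentation) :=
      h ▸ Submodule.mem_top
    simpa using (Submodule.mem_bot k).mp this
  rcases hσ.le_iff.mp (mapSubtype_le τ) with h | h
  · refine .inl (eq_bot_iff.mpr fun x hx => ?_)
    have := mem_mapSubtype.mpr hx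
    rw [h] at this
    exact Subtype.ext ((Submodule.mem_bot k).mp this)
  · exact .inr (eq_top_iff.mpr fun x _ => mem_mapSubtype.mp (h.symm ▸ x.2))

end Subrepresentation

namespace Representation

def invariantsSubrepresentation {k G V : Type*} [CommRing k] [Group G] [AddCommGroup V]
    [Module k V] (ρ : Representation k G V) (N : Subgroup G) [N.Normal] : Subrepresentation ρ :=
  ⟨invariants (ρ.comp N.subtype), fun g _ hv => le_comap_invariants ρ N g hv⟩

theorem ker_ofMulAction_quotient (k : Type*) {G : Type*} [Semiring k] [Nontrivial k] [Group G]
    (M : Subgroup G) [M.Normal] : (ofMulAction k G (G ⧸ M)).ker = M := by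
  ext g
  rw [MonoidHom.mem_ker]
  constructor
  · intro hg
    have := congr($hg (MonoidAlgebra.single (1 : G ⧸ M) (1 : k)))
    rw [ofMulAction_single, Module.End.one_apply] at this
    have := MonoidAlgebra.single_left_injective one_ne_zero this
    rwa [← QuotientGroup.mk_one, MulAction.Quotient.smul_mk, smul_eq_mul, mul_one,
      QuotientGroup.mk_one, QuotientGroup.eq_one_iff] at this
  · intro hg
    ext x : 2
    obtain ⟨a, rfl⟩ := QuotientGroup.mk_surjective x
    have : g • (a : G ⧸ M) = a := by
      rw [MulAction.Quotient.smul_mk, smul_eq_mul, QuotientGroup.eq]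
      simpa [mul_assoc] using Subgroup.Normal.conj_mem ‹_› _ (inv_mem hg) a⁻¹
    simp [this]

end Representation

namespace FDRep

open Representation

section AlgClosed

variable {k G : Type u} [Field k] [IsAlgClosed k] [Group G]

theorem simple_of_isIrreducible [Finite G] [NeZero (Nat.card G : k)] {V : Type u}
    [AddCommGroup V] [Module k V] [FiniteDimensional k V] (ρ : Representation k G V)
    [ρ.IsIrreducible] : Simple (FDRep.of ρ) := by
  rw [simple_iff_end_is_rank_one, ← IsIrreducible.finrank_intertwiningMap_self ρ]
  exact ((linHom.invariantsEquivFDRepHom (FDRep.of ρ) (FDRep.of ρ)).symm.trans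
    (invariantsEquivIntertwiningMap ρ ρ)).finrank_eq

theorem le_of_forall_simple_le_ker [Finite G] [NeZero (Nat.card G : k)] {M N : Subgroup G}
    [M.Normal] [N.Normal] (h : ∀ V : FDRep k G, Simple V → M ≤ V.ρ.ker → N ≤ V.ρ.ker) :
    N ≤ M := by
  let ρ := ofMulAction k G (G ⧸ M)
  -- `N` fixes every irreducible subrepresentation of `ρ` (their kernels contain `M`), and these
  -- exhaust `ρ` by Maschke's theorem
  have hinv : ρ.invariantsSubrepresentation N = ⊤ := eq_top_of_forall_isAtom_le fun A hA => by
    have := Subrepresentation.isIrreducible_toRepresentation_of_isAtom hA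
    have hN := h _ (simple_of_isIrreducible A.toRepresentation) fun m hm => by
      ext x : 1
      exact Subtype.ext congr($((ker_ofMulAction_quotient k M).ge hm) x)
    intro v hv n
    exact congrArg Subtype.val (LinearMap.congr_fun (hN n.2) ⟨v, hv⟩)
  intro n hn
  rw [← ker_ofMulAction_quotient k M]
  exact LinearMap.ext fun x =>
    (hinv ▸ Submodule.mem_top : x ∈ ρ.invariantsSubrepresentation N) ⟨n, hn⟩

theorem exists_eq_algebraMap_of_forall_commute (V : FDRep k G) [Simple V] {f : V →ₗ[k] V}
    (hf : ∀ g, Commute f (V.ρ g)) : ∃ c : k, f = algebraMap k _ c := by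
  let φ : V ⟶ V :=
    { hom := ConcreteCategory.ofHom f
      comm := fun g => by
        ext x
        exact LinearMap.congr_fun (hf g).eq x }
  obtain ⟨c, hc⟩ := endomorphism_simple_eq_smul_id k φ
  refine ⟨c, ?_⟩
  rw [Module.algebraMap_end_eq_smul_id]
  exact (congr_arg (fun ψ : V ⟶ V => ψ.hom.hom.hom) hc).symm

end AlgClosed

section Complex

variable {G : Type} [Group G] [Finite G]

theorem mem_charCenter_iff (V : FDRep ℂ G) {g : G} :
    g ∈ charCenter V ↔ ∃ c : ℂ, V.ρ g = algebraMap ℂ _ c := by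
  have hpow : V.ρ g ^ Nat.card G = 1 := by rw [← map_pow, pow_card_eq_one', map_one]
  simp only [charCenter, Set.mem_ofPred_eq, char_one]
  constructor
  · intro hg
    exact Module.End.exists_eq_algebraMap_of_pow_eq_one_of_norm_trace_eq_finrank
      Nat.card_pos.ne' hpow (by exact_mod_cast hg)
  · rintro ⟨c, hc⟩
    rw [character, hc, Module.algebraMap_end_eq_smul_id, map_smul, LinearMap.trace_id,
      smul_eq_mul, norm_mul, Complex.norm_natCast]
    rcases subsingleton_or_nontrivial V with hV | hV
    · simp [Module.finrank_zero_of_subsingleton]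
    have : c ^ Nat.card G = 1 := (algebraMap ℂ (Module.End ℂ V)).injective (by simpa [← hc])
    simp [Complex.norm_eq_one_of_pow_eq_one this Nat.card_pos.ne']

theorem mem_charCenter_iff_forall_commutatorElement_mem_ker (V : FDRep ℂ G) [Simple V] {g : G} :
    g ∈ charCenter V ↔ ∀ h, ⁅g, h⁆ ∈ V.ρ.ker := by
  simp only [MonoidHom.commutatorElement_mem_ker_iff, mem_charCenter_iff]
  constructor
  · rintro ⟨c, hc⟩ h
    rw [hc]
    exact Algebra.commutes c _
  · exact V.exists_eq_algebraMap_of_forall_commute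

theorem subset_charCenter_iff_commutator_le_ker (V : FDRep ℂ G) [Simple V] (H : Subgroup G) :
    (H : Set G) ⊆ charCenter V ↔ ⁅H, ⊤⁆ ≤ V.ρ.ker := by
  simp only [Subgroup.commutator_le, Subgroup.mem_top, true_implies, Set.subset_def,
    SetLike.mem_coe, mem_charCenter_iff_forall_commutatorElement_mem_ker]

end Complex

end FDRep

theorem IsChainOfCenters.antitone {G : Type} [Group G] {n : ℕ} {X : ℕ → Subgroup G}
    (hX : IsChainOfCenters n X) {a b : ℕ} (hab : a ≤ b) (hb : b ≤ n) : X b ≤ X a := by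
  induction b, hab using Nat.le_induction with
  | base => exact le_rfl
  | succ b _ ih => exact (hX.2.2.1 b hb).le.trans (ih (by omega))

/-- if `G` is nested with chain of centers `X 0 > ⋯ > X n` and
`⁅X (i-1), G⁆ ≰ X i` for some `1 ≤ i ≤ n`, then `⁅X (i-1), G⁆ = ⁅⁅X (i-1), G⁆, G⁆`. -/
theorem commutator_perfect_of_not_le (G : Type) [Group G] [Fintype G]
    (n : ℕ) (X : ℕ → Subgroup G) (hX : IsChainOfCenters n X) :
    ∀ i < n, ¬ ⁅X i, (⊤ : Subgroup G)⁆ ≤ X (i + 1) →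
      ⁅X i, (⊤ : Subgroup G)⁆ =
        ⁅(⁅X i, (⊤ : Subgroup G)⁆ : Subgroup G), (⊤ : Subgroup G)⁆ := by
  intro i hi hnot
  have : (X i).Normal := hX.2.1 i hi.le
  refine le_antisymm (FDRep.le_of_forall_simple_le_ker (k := ℂ) fun V hV hM => ?_)
    (Subgroup.commutator_le_left _ _)
  obtain ⟨j, hj, hVj⟩ := hX.2.2.2.2 V hV
  have hji : j ≤ i := by
    by_contra! hij
    refine hnot fun z hz => hX.antitone hij hj ?_
    rw [← SetLike.mem_coe, ← hVj]
    exact (V.subset_charCenter_iff_commutator_le_ker _).mpr hM hz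
  exact (V.subset_charCenter_iff_commutator_le_ker _).mp (hVj ▸ hX.antitone hji hi.le)
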